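/- arXiv:1707.00959 — 2 statements merged into one kernel-verified Lean document; each statement's English description precedes it below -/
import Mathlib

section
/- Let Ψ(x) := (cos|x| + |x|·sin|x|)/(8π²|x|³) and Λ(x) := 1/(8π²|x|³) on ℝ⁵∖{0}. For every r ∈ (0, π/2) there exist constants κ₁, κ₂ > 0 (depending only on r) such that for all x ∈ ℝ⁵ with 0 < |x| < r one has κ₁|x|⁻¹ ≤ Ψ(x) − Λ(x) ≤ κ₂|x|⁻¹. In particular Ψ − Λ > 0 on this punctured ball. -/
open MeasureTheory Real

noncomputable section

/-- The real part of the outgoing fundamental solution of the Helmholtz operator `-Δ - 1`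
on `ℝ⁵`. -/
def Psi5 (x : EuclideanSpace ℝ (Fin 5)) : ℝ :=
  (Real.cos ‖x‖ + ‖x‖ * Real.sin ‖x‖) / (8 * Real.pi ^ 2 * ‖x‖ ^ 3)

/-- The fundamental solution of `-Δ` on `ℝ⁵`. -/
def Lambda5 (x : EuclideanSpace ℝ (Fin 5)) : ℝ :=
  1 / (8 * Real.pi ^ 2 * ‖x‖ ^ 3)

/-- Lemma 2.1(i), five-dimensional case: for every `r ∈ (0, π/2)` there are constants
`κ₁, κ₂ > 0` with `κ₁|x|⁻¹ ≤ Ψ(x) - Λ(x) ≤ κ₂|x|⁻¹` for all `0 < |x| < r`. -/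
theorem stmt1 (r : ℝ) (hr0 : 0 < r) (hrπ : r < Real.pi / 2) :
    ∃ κ₁ κ₂ : ℝ, 0 < κ₁ ∧ 0 < κ₂ ∧
      ∀ x : EuclideanSpace ℝ (Fin 5), 0 < ‖x‖ → ‖x‖ < r →
        κ₁ * ‖x‖⁻¹ ≤ Psi5 x - Lambda5 x ∧ Psi5 x - Lambda5 x ≤ κ₂ * ‖x‖⁻¹ := by
  have hπ : (0:ℝ) < Real.pi := Real.pi_pos
  have hπ4 : Real.pi < 4 := by linarith [Real.pi_lt_d2]
  have hc : (0:ℝ) < 2 / Real.pi - 1 / 2 := by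
    rw [sub_pos, div_lt_div_iff₀ (by norm_num) hπ]; linarith
  refine ⟨(2 / Real.pi - 1 / 2) / (8 * Real.pi ^ 2), 1 / (8 * Real.pi ^ 2),
    by positivity, by positivity, fun x hx hxr => ?_⟩
  set t := ‖x‖ with ht
  have ht3 : (0:ℝ) < t ^ 3 := by positivity
  have hden : (0:ℝ) < 8 * Real.pi ^ 2 * t ^ 3 := by positivity
  have hdiff : Psi5 x - Lambda5 x
      = (Real.cos t + t * Real.sin t - 1) / (8 * Real.pi ^ 2 * t ^ 3) := by
    unfold Psi5 Lambda5
    rw [div_sub_div_same]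
  rw [hdiff]
  have htπ : t ≤ Real.pi / 2 := le_of_lt (hxr.trans hrπ)
  have key : ∀ a N : ℝ, a * t ^ 2 ≤ N → a / (8 * Real.pi ^ 2) * t⁻¹ ≤ N / (8 * Real.pi ^ 2 * t ^ 3) := by
    intro a N h
    rw [inv_eq_one_div, div_mul_div_comm, div_le_div_iff₀ (by positivity) hden]
    nlinarith [mul_le_mul_of_nonneg_left h (show (0:ℝ) ≤ 8 * Real.pi ^ 2 * t by positivity)]
  have key2 : ∀ a N : ℝ, N ≤ a * t ^ 2 → N / (8 * Real.pi ^ 2 * t ^ 3) ≤ a / (8 * Real.pi ^ 2) * t⁻¹ := by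
    intro a N h
    rw [inv_eq_one_div, div_mul_div_comm, div_le_div_iff₀ hden (by positivity)]
    nlinarith [mul_le_mul_of_nonneg_left h (show (0:ℝ) ≤ 8 * Real.pi ^ 2 * t by positivity)]
  constructor
  · -- lower bound
    have hcos : 1 - t ^ 2 / 2 ≤ Real.cos t := Real.one_sub_sq_div_two_le_cos
    have hsin : 2 / Real.pi * t ≤ Real.sin t := Real.mul_le_sin hx.le htπ
    refine key _ _ ?_
    nlinarith [mul_le_mul_of_nonneg_left hsin hx.le]
  · -- upper bound
    have hcos : Real.cos t ≤ 1 := Real.cos_le_one t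
    have hsin : Real.sin t ≤ t := Real.sin_le hx.le
    refine key2 _ _ ?_
    nlinarith [mul_le_mul_of_nonneg_left hsin hx.le]

end
end

section
/- Let Ψ(x) := (cos|x| + |x|·sin|x|)/(8π²|x|³) and Λ(x) := 1/(8π²|x|³) on ℝ⁵∖{0}; the function Ψ − Λ is smooth on ℝ⁵∖{0}. For every r ∈ (0, π/2) and every integer k ≥ 1 there exists a constant κ₃ > 0 (depending only on k and r) such that the k-th derivative satisfies ‖D^k(Ψ − Λ)(x)‖ ≤ κ₃|x|^{−1−k} for all x ∈ ℝ⁵ with 0 < |x| < r. -/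
open MeasureTheory Real

noncomputable section

namespace Stmt3Aux

/-- coefficients of the entire function `G` with `G (t^2) * t^2 = cos t + t sin t - 1`. -/
def cG : ℕ → ℝ := fun n => (-1) ^ n * (2 * (n : ℝ) + 1) / (Nat.factorial (2 * n + 2))

lemma abs_cG_le (n : ℕ) : ‖cG n‖ ≤ 1 / (Nat.factorial n) := by
  have h1 : ((Nat.factorial (2 * n + 2) : ℝ)) ≠ 0 := by positivity
  have h2 : ((Nat.factorial n : ℝ)) ≠ 0 := by positivity
  have key : (2 * (n : ℝ) + 1) * (Nat.factorial n) ≤ (Nat.factorial (2 * n + 2)) := by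
    have : (2 * n + 1) * Nat.factorial n ≤ Nat.factorial (2 * n + 2) := by
      calc (2 * n + 1) * Nat.factorial n ≤ (2 * n + 1) * Nat.factorial (2 * n) :=
            Nat.mul_le_mul_left _ (Nat.factorial_le (by omega))
        _ = Nat.factorial (2 * n + 1) := (Nat.factorial_succ (2 * n)).symm
        _ ≤ Nat.factorial (2 * n + 2) := Nat.factorial_le (by omega)
    exact_mod_cast this
  rw [cG, norm_div, norm_mul, norm_pow, norm_neg, norm_one, one_pow, one_mul]
  rw [Real.norm_of_nonneg (by positivity), Real.norm_of_nonneg (by positivity)]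
  rw [div_le_div_iff₀ (by positivity) (by positivity)]
  linarith

def pG : FormalMultilinearSeries ℝ ℝ ℝ := FormalMultilinearSeries.ofScalars ℝ cG

lemma pG_radius : pG.radius = ⊤ := by
  apply FormalMultilinearSeries.radius_eq_top_of_summable_norm
  intro r
  have : Summable fun n : ℕ => (r : ℝ) ^ n / (Nat.factorial n) :=
    Real.summable_pow_div_factorial r
  apply Summable.of_nonneg_of_le (fun n => by positivity) _ this
  intro n
  rw [pG, FormalMultilinearSeries.ofScalars_norm]
  calc ‖cG n‖ * (r : ℝ) ^ n ≤ 1 / (Nat.factorial n) * (r : ℝ) ^ n := by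
        apply mul_le_mul_of_nonneg_right (abs_cG_le n) (by positivity)
    _ = (r : ℝ) ^ n / (Nat.factorial n) := by ring

def G : ℝ → ℝ := pG.sum

lemma G_hasSum (s : ℝ) : HasSum (fun n => cG n * s ^ n) (G s) := by
  have hmem : s ∈ EMetric.ball (0 : ℝ) pG.radius := by
    rw [pG_radius]; exact edist_lt_top s 0
  have := pG.hasSum hmem
  convert this using 2 with n
  case e'_5 => rw [pG, FormalMultilinearSeries.ofScalars_apply_eq, smul_eq_mul]
  all_goals rfl

lemma G_contDiff : ContDiff ℝ (⊤ : ℕ∞) G := by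
  have h : HasFPowerSeriesOnBall G pG 0 pG.radius :=
    pG.hasFPowerSeriesOnBall (by rw [pG_radius]; exact ENNReal.zero_lt_top)
  exact AnalyticOnNhd.contDiff (fun x _ =>
    h.analyticAt_of_mem (by rw [pG_radius]; exact edist_lt_top _ _))

lemma G_spec (t : ℝ) : G (t ^ 2) * t ^ 2 = Real.cos t + t * Real.sin t - 1 := by
  have hL : HasSum (fun n => cG n * (t ^ 2) ^ n * t ^ 2) (G (t ^ 2) * t ^ 2) :=
    (G_hasSum (t ^ 2)).mul_right (t ^ 2)
  have hc : HasSum (fun n : ℕ => (-1 : ℝ) ^ (n + 1) * t ^ (2 * (n + 1)) / (Nat.factorial (2 * (n + 1))))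
      (Real.cos t - 1) := by
    refine (hasSum_nat_add_iff (f := fun n : ℕ => (-1 : ℝ) ^ n * t ^ (2 * n) / (Nat.factorial (2 * n))) 1).mpr ?_
    simpa using Real.hasSum_cos t
  have hs : HasSum (fun n : ℕ => t * ((-1 : ℝ) ^ n * t ^ (2 * n + 1) / (Nat.factorial (2 * n + 1))))
      (t * Real.sin t) := (Real.hasSum_sin t).mul_left t
  have hR := hc.add hs
  have heq : (fun n : ℕ => (-1 : ℝ) ^ (n + 1) * t ^ (2 * (n + 1)) / (Nat.factorial (2 * (n + 1)))
      + t * ((-1 : ℝ) ^ n * t ^ (2 * n + 1) / (Nat.factorial (2 * n + 1))))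
      = fun n => cG n * (t ^ 2) ^ n * t ^ 2 := by
    funext n
    have h1 : 2 * (n + 1) = 2 * n + 2 := by ring
    have hf2 : (Nat.factorial (2 * n + 2) : ℝ) = (2 * (n : ℝ) + 2) * (Nat.factorial (2 * n + 1)) := by
      have := Nat.factorial_succ (2 * n + 1)
      push_cast [this]; ring
    have hne1 : (Nat.factorial (2 * n + 1) : ℝ) ≠ 0 := by positivity
    have hne2 : (Nat.factorial (2 * n + 2) : ℝ) ≠ 0 := by positivity
    rw [h1, cG]
    rw [hf2]
    have hpow : t ^ (2 * n + 2) = (t ^ 2) ^ n * t ^ 2 := by ring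
    have hpow' : t ^ (2 * n + 1) * t = (t ^ 2) ^ n * t ^ 2 := by ring
    field_simp [hf2]
    ring
  rw [heq] at hR
  have := hL.unique hR
  linarith [this]

abbrev E5 := EuclideanSpace ℝ (Fin 5)

def vfun : E5 → ℝ := fun x => ‖x‖⁻¹

lemma S_open : IsOpen ({(0 : E5)}ᶜ) := isOpen_compl_singleton
lemma S_ud : UniqueDiffOn ℝ ({(0 : E5)}ᶜ) := S_open.uniqueDiffOn

lemma vfun_contDiffOn : ContDiffOn ℝ (⊤ : ℕ∞) vfun ({(0 : E5)}ᶜ) := by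
  intro x hx
  have hx0 : x ≠ 0 := hx
  exact (((contDiffAt_norm (𝕜 := ℝ) hx0).inv (norm_ne_zero_iff.mpr hx0)).contDiffWithinAt)

lemma vbound (i : ℕ) : ∃ C : ℝ, 1 ≤ C ∧ ∀ x : E5, x ≠ 0 →
    ‖iteratedFDerivWithin ℝ i vfun ({(0 : E5)}ᶜ) x‖ ≤ C * ‖x‖ ^ (-1 - (i : ℝ)) := by
  have hcont : ContinuousOn (fun y => ‖iteratedFDerivWithin ℝ i vfun ({(0 : E5)}ᶜ) y‖)
      (Metric.sphere (0 : E5) 1) := by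
    apply ContinuousOn.norm
    apply (vfun_contDiffOn.continuousOn_iteratedFDerivWithin (m := i) (by exact_mod_cast le_top) S_ud).mono
    intro y hy
    simp only [Metric.mem_sphere, dist_zero_right] at hy
    simp only [Set.mem_compl_iff, Set.mem_singleton_iff]
    intro h; rw [h] at hy; simp at hy
  obtain ⟨C₀, hC₀⟩ := (isCompact_sphere (0 : E5) 1).exists_bound_of_continuousOn
    ((vfun_contDiffOn.continuousOn_iteratedFDerivWithin (m := i) (by exact_mod_cast le_top) S_ud).mono
      (fun y hy => by
        simp only [Metric.mem_sphere, dist_zero_right] at hy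
        simp only [Set.mem_compl_iff, Set.mem_singleton_iff]
        intro h; rw [h] at hy; simp at hy))
  refine ⟨max C₀ 1, le_max_right _ _, ?_⟩
  intro x hx0
  set t : ℝ := ‖x‖ with ht_def
  have ht : 0 < t := norm_pos_iff.mpr hx0
  set y : E5 := t⁻¹ • x with hy_def
  have hyn : ‖y‖ = 1 := by
    rw [hy_def, norm_smul, norm_inv, norm_norm, ← ht_def, inv_mul_cancel₀ ht.ne']
  have hy0 : y ≠ 0 := by
    intro h; rw [h] at hyn; simp at hyn
  set g : E5 →L[ℝ] E5 := t • ContinuousLinearMap.id ℝ E5 with hg_def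
  have hgapp : ∀ z : E5, g z = t • z := fun z => rfl
  have hpre : (⇑g) ⁻¹' ({(0 : E5)}ᶜ) = ({(0 : E5)}ᶜ) := by
    ext z
    simp [hgapp, smul_eq_zero, ht.ne']
  have hgy : g y = x := by
    rw [hgapp, hy_def, smul_inv_smul₀ ht.ne']
  have key := ContinuousLinearMap.iteratedFDerivWithin_comp_right (f := vfun) g
    vfun_contDiffOn S_ud (by rw [hpre]; exact S_ud) (x := y) (by rw [hgy]; exact hx0) (i := i) (by exact_mod_cast le_top)
  rw [hpre, hgy] at key
  -- LHS: vfun ∘ g = t⁻¹ • vfun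
  have hcomp : vfun ∘ g = t⁻¹ • vfun := by
    funext z
    simp only [Function.comp_apply, vfun, hgapp, Pi.smul_apply, smul_eq_mul]
    rw [norm_smul, Real.norm_of_nonneg ht.le, mul_inv]
  have hlhs : iteratedFDerivWithin ℝ i (vfun ∘ g) ({(0 : E5)}ᶜ) y
      = t⁻¹ • iteratedFDerivWithin ℝ i vfun ({(0 : E5)}ᶜ) y := by
    rw [hcomp]
    exact iteratedFDerivWithin_const_smul_apply ((vfun_contDiffOn y hy0).of_le (by exact_mod_cast le_top)) S_ud hy0
  -- RHS: composition with scalar map = t^i •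
  have hrhs : (iteratedFDerivWithin ℝ i vfun ({(0 : E5)}ᶜ) x).compContinuousLinearMap
      (fun _ => g) = t ^ i • iteratedFDerivWithin ℝ i vfun ({(0 : E5)}ᶜ) x := by
    ext m
    simp only [ContinuousMultilinearMap.compContinuousLinearMap_apply,
      ContinuousMultilinearMap.smul_apply, hgapp]
    rw [ContinuousMultilinearMap.map_smul_univ]
    simp [Finset.prod_const]
  rw [hlhs, hrhs] at key
  have hxs : iteratedFDerivWithin ℝ i vfun ({(0 : E5)}ᶜ) x
      = ((t ^ i)⁻¹ * t⁻¹) • iteratedFDerivWithin ℝ i vfun ({(0 : E5)}ᶜ) y := by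
    have hti : (t : ℝ) ^ i ≠ 0 := pow_ne_zero _ ht.ne'
    rw [mul_smul, key, inv_smul_smul₀ hti]
  have hnorm : ‖iteratedFDerivWithin ℝ i vfun ({(0 : E5)}ᶜ) x‖
      = (t ^ i)⁻¹ * t⁻¹ * ‖iteratedFDerivWithin ℝ i vfun ({(0 : E5)}ᶜ) y‖ := by
    rw [hxs, norm_smul, Real.norm_of_nonneg (by positivity)]
  rw [hnorm]
  have hCy : ‖iteratedFDerivWithin ℝ i vfun ({(0 : E5)}ᶜ) y‖ ≤ max C₀ 1 := by
    refine le_trans (hC₀ y (by simp [hyn])) (le_max_left _ _)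
  have hrpow : t ^ (-1 - (i : ℝ)) = (t ^ i)⁻¹ * t⁻¹ := by
    rw [show (-1 - (i : ℝ)) = -((i : ℝ) + 1) by ring, Real.rpow_neg ht.le,
      Real.rpow_add ht, Real.rpow_one, Real.rpow_natCast, mul_inv]
  rw [hrpow]
  calc (t ^ i)⁻¹ * t⁻¹ * ‖iteratedFDerivWithin ℝ i vfun ({(0 : E5)}ᶜ) y‖
      ≤ (t ^ i)⁻¹ * t⁻¹ * max C₀ 1 := by
        apply mul_le_mul_of_nonneg_left hCy (by positivity)
    _ = max C₀ 1 * ((t ^ i)⁻¹ * t⁻¹) := by ring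

def ufun : E5 → ℝ := fun x => G (‖x‖ ^ 2)

lemma ufun_contDiff : ContDiff ℝ (⊤ : ℕ∞) ufun := G_contDiff.comp (contDiff_norm_sq ℝ)

lemma ubound (i : ℕ) : ∃ M : ℝ, 1 ≤ M ∧ ∀ x ∈ Metric.closedBall (0 : E5) 2,
    ‖iteratedFDeriv ℝ i ufun x‖ ≤ M := by
  obtain ⟨M₀, hM₀⟩ := (isCompact_closedBall (0 : E5) 2).exists_bound_of_continuousOn
    ((ufun_contDiff.continuous_iteratedFDeriv (m := i) (by exact_mod_cast le_top)).continuousOn)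
  exact ⟨max M₀ 1, le_max_right _ _, fun x hx => le_trans (hM₀ x hx) (le_max_left _ _)⟩

lemma hEq : ∀ x : E5, x ≠ 0 →
    Psi5 x - Lambda5 x = (8 * Real.pi ^ 2)⁻¹ • (ufun x * vfun x) := by
  intro x hx
  set t : ℝ := ‖x‖ with ht_def
  have ht : t ≠ 0 := norm_ne_zero_iff.mpr hx
  have hG := G_spec t
  simp only [Psi5, Lambda5, ufun, vfun, smul_eq_mul, ← ht_def]
  rw [div_sub_div_same, ← hG]
  field_simp

lemma hEqOn : Set.EqOn (fun x => Psi5 x - Lambda5 x)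
    (fun x => (8 * Real.pi ^ 2)⁻¹ • (ufun x * vfun x)) ({(0 : E5)}ᶜ) :=
  fun x hx => hEq x hx

end Stmt3Aux

open Stmt3Aux in
/-- Lemma 2.1(ii), five-dimensional case: `Ψ - Λ` is smooth away from the origin and for
every `r ∈ (0, π/2)` and `k ≥ 1` there is `κ₃ > 0` with
`‖D^k(Ψ - Λ)(x)‖ ≤ κ₃ |x|^(-1 - k)` for all `0 < |x| < r`. -/
theorem stmt3 :
    ContDiffOn ℝ (⊤ : ℕ∞) (fun x => Psi5 x - Lambda5 x) {(0 : EuclideanSpace ℝ (Fin 5))}ᶜ ∧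
    ∀ r : ℝ, 0 < r → r < Real.pi / 2 → ∀ k : ℕ, 1 ≤ k →
      ∃ κ₃ : ℝ, 0 < κ₃ ∧
        ∀ x : EuclideanSpace ℝ (Fin 5), 0 < ‖x‖ → ‖x‖ < r →
          ‖iteratedFDeriv ℝ k (fun x => Psi5 x - Lambda5 x) x‖ ≤ κ₃ * ‖x‖ ^ (-(1 : ℝ) - k) := by
  have huv : ContDiffOn ℝ (⊤ : ℕ∞) (fun x => ufun x * vfun x) ({(0 : E5)}ᶜ) :=
    (ufun_contDiff.contDiffOn).mul vfun_contDiffOn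
  have hcd : ContDiffOn ℝ (⊤ : ℕ∞) (fun x => (8 * Real.pi ^ 2)⁻¹ • (ufun x * vfun x)) ({(0 : E5)}ᶜ) :=
    huv.const_smul _
  constructor
  · exact hcd.congr (fun x hx => hEq x hx)
  intro r hr hrpi k hk
  choose Cv hCv1 hCv2 using vbound
  choose Mu hMu1 hMu2 using ubound
  have hr2 : r < 2 := lt_trans hrpi (by
    have := Real.pi_lt_d2
    linarith)
  set κ₀ : ℝ := ∑ i ∈ Finset.range (k + 1), (k.choose i : ℝ) * Mu i * Cv (k - i) with hκ₀
  have hκ₀pos : 0 < κ₀ := by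
    apply Finset.sum_pos
    · intro i hi
      simp only [Finset.mem_range] at hi
      have h1 : (0 : ℝ) < k.choose i := by
        exact_mod_cast Nat.choose_pos (by omega)
      have h2 := hMu1 i
      have h3 := hCv1 (k - i)
      positivity
    · exact ⟨0, Finset.mem_range.mpr (by omega)⟩
  refine ⟨(8 * Real.pi ^ 2)⁻¹ * 2 ^ k * κ₀, by positivity, ?_⟩
  intro x hx hxr
  have hx0 : x ≠ 0 := norm_ne_zero_iff.mp hx.ne'
  have hxS : x ∈ ({(0 : E5)}ᶜ) := Set.mem_compl_singleton_iff.mpr hx0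
  -- pass to within-derivatives on the open set {0}ᶜ
  have e1 : iteratedFDeriv ℝ k (fun x => Psi5 x - Lambda5 x) x
      = iteratedFDerivWithin ℝ k (fun x => Psi5 x - Lambda5 x) ({(0 : E5)}ᶜ) x :=
    (iteratedFDerivWithin_of_isOpen k S_open hxS).symm
  have e2 : iteratedFDerivWithin ℝ k (fun x => Psi5 x - Lambda5 x) ({(0 : E5)}ᶜ) x
      = iteratedFDerivWithin ℝ k (fun x => (8 * Real.pi ^ 2)⁻¹ • (ufun x * vfun x))
        ({(0 : E5)}ᶜ) x :=
    iteratedFDerivWithin_congr hEqOn hxS k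
  have e3 : iteratedFDerivWithin ℝ k (fun x => (8 * Real.pi ^ 2)⁻¹ • (ufun x * vfun x))
        ({(0 : E5)}ᶜ) x
      = (8 * Real.pi ^ 2)⁻¹ • iteratedFDerivWithin ℝ k (fun x => ufun x * vfun x)
        ({(0 : E5)}ᶜ) x :=
    iteratedFDerivWithin_const_smul_apply (𝕜 := ℝ) (a := (8 * Real.pi ^ 2)⁻¹)
      (f := fun x => ufun x * vfun x) ((huv x hxS).of_le (by exact_mod_cast le_top)) S_ud hxS
  rw [e1, e2, e3, norm_smul]
  have hmul := norm_iteratedFDerivWithin_mul_le (𝕜 := ℝ)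
    (ufun_contDiff.contDiffOn (s := {(0 : E5)}ᶜ)) vfun_contDiffOn S_ud hxS (n := k) (by exact_mod_cast le_top)
  have hub : ∀ i, ‖iteratedFDerivWithin ℝ i ufun ({(0 : E5)}ᶜ) x‖ ≤ Mu i := by
    intro i
    rw [iteratedFDerivWithin_of_isOpen i S_open hxS]
    exact hMu2 i x (by
      simp only [Metric.mem_closedBall, dist_zero_right]
      linarith)
  have hterm : ∀ i ∈ Finset.range (k + 1),
      (k.choose i : ℝ) * ‖iteratedFDerivWithin ℝ i ufun ({(0 : E5)}ᶜ) x‖ *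
        ‖iteratedFDerivWithin ℝ (k - i) vfun ({(0 : E5)}ᶜ) x‖
      ≤ (k.choose i : ℝ) * Mu i * Cv (k - i) * (2 ^ k * ‖x‖ ^ (-(1 : ℝ) - k)) := by
    intro i hi
    simp only [Finset.mem_range] at hi
    have hik : i ≤ k := by omega
    have hv := hCv2 (k - i) x hx0
    have hrpow : ‖x‖ ^ (-1 - ((k - i : ℕ) : ℝ)) ≤ 2 ^ k * ‖x‖ ^ (-(1 : ℝ) - k) := by
      have hcast : ((k - i : ℕ) : ℝ) = (k : ℝ) - i := by
        push_cast [Nat.cast_sub hik]; ring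
      have hsplit : ‖x‖ ^ (-1 - ((k - i : ℕ) : ℝ))
          = ‖x‖ ^ (-(1 : ℝ) - k) * ‖x‖ ^ (i : ℝ) := by
        rw [← Real.rpow_add hx, hcast]; ring_nf
      rw [hsplit]
      have hxi : ‖x‖ ^ (i : ℝ) ≤ 2 ^ k := by
        rw [Real.rpow_natCast]
        calc ‖x‖ ^ i ≤ 2 ^ i := pow_le_pow_left₀ (norm_nonneg _) (by linarith) i
          _ ≤ 2 ^ k := pow_le_pow_right₀ (by norm_num) hik
      calc ‖x‖ ^ (-(1 : ℝ) - k) * ‖x‖ ^ (i : ℝ)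
          ≤ ‖x‖ ^ (-(1 : ℝ) - k) * 2 ^ k := by
            apply mul_le_mul_of_nonneg_left hxi (Real.rpow_nonneg (norm_nonneg _) _)
        _ = 2 ^ k * ‖x‖ ^ (-(1 : ℝ) - k) := by ring
    have h1 : (0 : ℝ) ≤ (k.choose i : ℝ) := Nat.cast_nonneg _
    have hu := hub i
    calc (k.choose i : ℝ) * ‖iteratedFDerivWithin ℝ i ufun ({(0 : E5)}ᶜ) x‖ *
        ‖iteratedFDerivWithin ℝ (k - i) vfun ({(0 : E5)}ᶜ) x‖
        ≤ (k.choose i : ℝ) * Mu i * (Cv (k - i) * ‖x‖ ^ (-1 - ((k - i : ℕ) : ℝ))) := by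
          apply mul_le_mul
          · exact mul_le_mul_of_nonneg_left hu h1
          · exact hv
          · exact norm_nonneg _
          · have := hMu1 i; positivity
      _ ≤ (k.choose i : ℝ) * Mu i * (Cv (k - i) * (2 ^ k * ‖x‖ ^ (-(1 : ℝ) - k))) := by
          apply mul_le_mul_of_nonneg_left _ (by have := hMu1 i; positivity)
          apply mul_le_mul_of_nonneg_left hrpow (by linarith [hCv1 (k - i)])
      _ = (k.choose i : ℝ) * Mu i * Cv (k - i) * (2 ^ k * ‖x‖ ^ (-(1 : ℝ) - k)) := by ring
  have hsum : ‖iteratedFDerivWithin ℝ k (fun x => ufun x * vfun x) ({(0 : E5)}ᶜ) x‖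
      ≤ κ₀ * (2 ^ k * ‖x‖ ^ (-(1 : ℝ) - k)) := by
    refine le_trans hmul ?_
    rw [hκ₀, Finset.sum_mul]
    exact Finset.sum_le_sum hterm
  have h8 : (0 : ℝ) < (8 * Real.pi ^ 2)⁻¹ := by positivity
  calc ‖(8 * Real.pi ^ 2)⁻¹‖ * ‖iteratedFDerivWithin ℝ k (fun x => ufun x * vfun x)
        ({(0 : E5)}ᶜ) x‖
      ≤ (8 * Real.pi ^ 2)⁻¹ * (κ₀ * (2 ^ k * ‖x‖ ^ (-(1 : ℝ) - k))) := by
        rw [Real.norm_of_nonneg h8.le]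
        exact mul_le_mul_of_nonneg_left hsum h8.le
    _ = (8 * Real.pi ^ 2)⁻¹ * 2 ^ k * κ₀ * ‖x‖ ^ (-(1 : ℝ) - k) := by ring


end
end
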